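/- Let M be a real d×d matrix with eigenpair (α, v), where α ≠ 0 and v ∈ ℝ^d. Suppose λ ∈ ℝ satisfies λ² − (2+α)λ + 1 = 0 (so λ ≠ 1). Then the 2d-dimensional vector w = (v, v/(λ−1)) is an eigenvector with eigenvalue λ of the block matrix P = [[I + M, M],[I, I]]. -/

import Mathlib

theorem ne_one_of_sq_sub_mul_add_one_eq_zero {R : Type*} [CommRing R] {α l : R} (hα : α ≠ 0)
    (hl : l ^ 2 - (2 + α) * l + 1 = 0) : l ≠ 1 := by
  rintro rfl
  exact hα (by linear_combination -hl)

/-- The quadratic relation divided by `l - 1`. -/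
theorem one_add_add_mul_inv_sub_one_eq {K : Type*} [Field K] {α l : K} (hl1 : l ≠ 1)
    (hl : l ^ 2 - (2 + α) * l + 1 = 0) : 1 + α + α * (l - 1)⁻¹ = l := by
  have hsub : l - 1 ≠ 0 := sub_ne_zero.mpr hl1
  field_simp
  linear_combination -hl

section Module

variable {K V : Type*} [Field K] [AddCommGroup V] [Module K V]

theorem LinearMap.add_add_apply_inv_sub_one_smul_eq {f : V →ₗ[K] V} {v : V} {α l : K}
    (hf : f v = α • v) (hl1 : l ≠ 1) (hl : l ^ 2 - (2 + α) * l + 1 = 0) :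
    v + f v + f ((l - 1)⁻¹ • v) = l • v := by
  calc v + f v + f ((l - 1)⁻¹ • v) = (1 + α + α * (l - 1)⁻¹) • v := by
        rw [map_smul, hf, smul_smul, add_smul, add_smul, one_smul, mul_comm]
    _ = l • v := by rw [one_add_add_mul_inv_sub_one_eq hl1 hl]

theorem add_inv_sub_one_smul_eq (v : V) {l : K} (hl1 : l ≠ 1) :
    v + (l - 1)⁻¹ • v = l • ((l - 1)⁻¹ • v) := by
  have hsub : l - 1 ≠ 0 := sub_ne_zero.mpr hl1
  have hcoeff : 1 + (l - 1)⁻¹ = l * (l - 1)⁻¹ := by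
    field_simp
    ring
  rw [smul_smul, ← hcoeff, add_smul, one_smul]

end Module

theorem block_matrix_eigenvector_general
    (d : ℕ) (M : Matrix (Fin d) (Fin d) ℝ) (v : Fin d → ℝ) (α l : ℝ)
    (hα : α ≠ 0) (hev : M.mulVec v = α • v)
    (hl : l ^ 2 - (2 + α) * l + 1 = 0) :
    l ≠ 1 ∧
      (v + M.mulVec v + M.mulVec ((l - 1)⁻¹ • v) = l • v ∧
        v + (l - 1)⁻¹ • v = l • ((l - 1)⁻¹ • v)) := by
  have hl1 : l ≠ 1 := ne_one_of_sq_sub_mul_add_one_eq_zero hα hl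
  exact ⟨hl1, LinearMap.add_add_apply_inv_sub_one_smul_eq (f := M.mulVecLin) hev hl1 hl,
    add_inv_sub_one_smul_eq v hl1⟩

/-- Let `M` be a real `d × d` matrix with eigenpair `(α, v)`, `α ≠ 0`, `v ≠ 0`.
If `λ ∈ ℝ` satisfies `λ² - (2+α)λ + 1 = 0` then `λ ≠ 1` and the vector
`w = (v, (λ-1)⁻¹ • v)` is an eigenvector with eigenvalue `λ` of the block map
`P(x, y) = (x + M x + M y, x + y)`. -/
theorem block_matrix_eigenvector
    (d : ℕ) (M : Matrix (Fin d) (Fin d) ℝ) (v : Fin d → ℝ) (α l : ℝ)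
    (hv : v ≠ 0) (hα : α ≠ 0) (hev : M.mulVec v = α • v)
    (hl : l ^ 2 - (2 + α) * l + 1 = 0) :
    l ≠ 1 ∧
      (v + M.mulVec v + M.mulVec ((l - 1)⁻¹ • v) = l • v ∧
        v + (l - 1)⁻¹ • v = l • ((l - 1)⁻¹ • v)) :=
  block_matrix_eigenvector_general d M v α l hα hev hl
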